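/- Cluster-and-combine satisfies the Axiom of Transformation: if φ : X → Y satisfies α c̄_X(x,x') + (1-α) c̲_X(x,x') ≥ α c̄_Y(φ(x),φ(x')) + (1-α) c̲_Y(φ(x),φ(x')) for all x, x', then u^CL_X(x,x') ≥ u^CL_Y(φ(x),φ(x')) for all x, x'. -/

import Mathlib

/-!
The image under `φ` of a chain from `x` to `x'` is a chain from `φ x` to `φ x'`, and by the
hypothesis each of its links costs at most the corresponding link of the original chain in the
combined cost `ĉ`. So every chain cost over `X` dominates a chain cost over `Y`, and taking infima
gives the claim. Finiteness of `Y` keeps the chain costs over `Y` bounded below, so that the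
infimum is not a junk value.
-/

/-- The cost of a chain (list of nodes): maximum dissimilarity over consecutive links. -/
def chainCost {X : Type*} (d : X → X → ℝ) : List X → ℝ
  | [] => 0
  | [_] => 0
  | a :: b :: l => max (d a b) (chainCost d (b :: l))

/-- The minimum chain cost between `x` and `x'`: infimum of costs of chains from `x` to `x'`. -/
noncomputable def minChainCost {X : Type*} (d : X → X → ℝ) (x x' : X) : ℝ :=
  sInf { c | ∃ l : List X, l.head? = some x ∧ l.getLast? = some x' ∧ chainCost d l = c }

/-- Cluster-and-combine ultrametric. -/
noncomputable def uCL {X : Type*} (dlb dub : X → X → ℝ) (α : ℝ) : X → X → ℝ :=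
  minChainCost (fun a b => α * minChainCost dub a b + (1 - α) * minChainCost dlb a b)

lemma le_chainCost {X : Type*} (d : X → X → ℝ) {m : ℝ} (hm0 : m ≤ 0) (hm : ∀ a b, m ≤ d a b) :
    ∀ l : List X, m ≤ chainCost d l
  | [] => hm0
  | [_] => hm0
  | a :: b :: _ => le_max_of_le_left (hm a b)

lemma chainCost_map_le {X Y : Type*} (dX : X → X → ℝ) (dY : Y → Y → ℝ) (φ : X → Y)
    (h : ∀ a b, dY (φ a) (φ b) ≤ dX a b) :
    ∀ l : List X, chainCost dY (l.map φ) ≤ chainCost dX l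
  | [] => le_rfl
  | [_] => le_rfl
  | a :: b :: l => max_le_max (h a b) (chainCost_map_le dX dY φ h (b :: l))

lemma minChainCost_map_le {X Y : Type*} (dX : X → X → ℝ) (dY : Y → Y → ℝ) (φ : X → Y)
    (hbdd : BddBelow (Set.range (Function.uncurry dY)))
    (h : ∀ a b, dY (φ a) (φ b) ≤ dX a b) (x x' : X) :
    minChainCost dY (φ x) (φ x') ≤ minChainCost dX x x' := by
  obtain ⟨m, hm⟩ := hbdd
  have hcost_bdd : BddBelow
      { c | ∃ l : List Y, l.head? = some (φ x) ∧ l.getLast? = some (φ x') ∧ chainCost dY l = c } :=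
    ⟨min m 0, by
      rintro c ⟨l, -, -, rfl⟩
      exact le_chainCost dY (min_le_right m 0)
        (fun a b => (min_le_left m 0).trans (hm ⟨(a, b), rfl⟩)) l⟩
  refine le_csInf ⟨_, [x, x'], rfl, rfl, rfl⟩ ?_
  rintro c ⟨l, hhead, hlast, rfl⟩
  refine (csInf_le hcost_bdd ⟨l.map φ, ?_, ?_, rfl⟩).trans (chainCost_map_le dX dY φ h l)
  · simp [List.head?_map, hhead]
  · simp [List.getLast?_map, hlast]

theorem uCL_axiom_transformation_general {X Y : Type*} [Fintype Y]
    (dlbX dubX : X → X → ℝ) (dlbY dubY : Y → Y → ℝ)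
    (α : ℝ)
    (φ : X → Y)
    (hred : ∀ x x',
      α * minChainCost dubY (φ x) (φ x') + (1 - α) * minChainCost dlbY (φ x) (φ x') ≤
      α * minChainCost dubX x x' + (1 - α) * minChainCost dlbX x x') :
    ∀ x x', uCL dlbY dubY α (φ x) (φ x') ≤ uCL dlbX dubX α x x' :=
  minChainCost_map_le _ _ φ (Set.finite_range _).bddBelow hred

theorem uCL_axiom_transformation {X Y : Type*} [Fintype X] [Fintype Y]
    (dlbX dubX : X → X → ℝ) (dlbY dubY : Y → Y → ℝ)
    (hslX : ∀ x y, dlbX x y = dlbX y x) (hsuX : ∀ x y, dubX x y = dubX y x)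
    (hbdX : ∀ x y, x ≠ y → 0 < dlbX x y ∧ dlbX x y ≤ dubX x y)
    (hdlX : ∀ x, dlbX x x = 0) (hduX : ∀ x, dubX x x = 0)
    (hslY : ∀ x y, dlbY x y = dlbY y x) (hsuY : ∀ x y, dubY x y = dubY y x)
    (hbdY : ∀ x y, x ≠ y → 0 < dlbY x y ∧ dlbY x y ≤ dubY x y)
    (hdlY : ∀ x, dlbY x x = 0) (hduY : ∀ x, dubY x x = 0)
    (α : ℝ) (hα0 : 0 ≤ α) (hα1 : α ≤ 1)
    (φ : X → Y)
    (hred : ∀ x x',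
      α * minChainCost dubY (φ x) (φ x') + (1 - α) * minChainCost dlbY (φ x) (φ x') ≤
      α * minChainCost dubX x x' + (1 - α) * minChainCost dlbX x x') :
    ∀ x x', uCL dlbY dubY α (φ x) (φ x') ≤ uCL dlbX dubX α x x' :=
  uCL_axiom_transformation_general dlbX dubX dlbY dubY α φ hred
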